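/- arXiv:1402.4658 — 3 statements merged into one kernel-verified Lean document; each statement's English description precedes it below -/
import Mathlib

section
/- Let n ≥ 1 and let a_1 ≤ a_2 ≤ … ≤ a_n be natural numbers with each a_i ≥ 3. Then ∑_{i=1}^{n} 1/a_i = n/2 − 1 (as rationals) holds if and only if the tuple (a_1, …, a_n) is one of the following seventeen tuples: (3,7,42), (3,8,24), (3,9,18), (3,10,15), (3,12,12), (4,5,20), (4,6,12), (4,8,8), (5,5,10), (6,6,6), (3,3,4,12), (3,3,6,6), (3,4,4,6), (4,4,4,4), (3,3,3,3,6), (3,3,3,4,4), (3,3,3,3,3,3). -/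
/-!
Each term `1 / a i` is at most `1 / 3`, so the equation forces `n ≤ 6`, and positivity of the
sum forces `n ≥ 3`. For a monotone tuple, the first `k` terms are at most `1 / 3` each and the
remaining `n - k` are at most `1 / a k` each, so `a k (3n - 6 - 2k) ≤ 6 (n - k)`. For
`3 ≤ n ≤ 6` this bounds every entry but the last; once those are fixed, the equation is linear in
the reciprocal of the last entry, which leaves the seventeen tuples.
-/

open Finset

theorem sum_one_div_le_of_monotone {K : Type*} [Field K] [LinearOrder K] [IsStrictOrderedRing K]
    {n : ℕ} {a : Fin n → K} {b : K} (hb : 0 < b) (hba : ∀ i, b ≤ a i) (hmono : Monotone a)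
    (k : Fin n) :
    ∑ i, 1 / a i ≤ k / b + (n - k) / a k := by
  calc ∑ i, 1 / a i = ∑ i ∈ Iio k, 1 / a i + ∑ i ∈ Ici k, 1 / a i := by
        rw [← sum_union (disjoint_left.2 fun i hi hi' => (mem_Iio.1 hi).not_ge (mem_Ici.1 hi'))]
        congr 1; ext i; simp [lt_or_ge]
    _ ≤ ∑ i ∈ Iio k, 1 / b + ∑ i ∈ Ici k, 1 / a k := by
        gcongr with i hi i hi
        · exact hba i
        · exact hb.trans_le (hba k)
        · exact hmono (mem_Ici.1 hi)
    _ = k / b + (n - k) / a k := by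
        simp [Fin.card_Iio, Fin.card_Ici, Nat.cast_sub k.is_lt.le]
        ring

def vertexCoronaTypes : List (List ℕ) :=
  [[3, 7, 42], [3, 8, 24], [3, 9, 18], [3, 10, 15], [3, 12, 12], [4, 5, 20], [4, 6, 12],
    [4, 8, 8], [5, 5, 10], [6, 6, 6], [3, 3, 4, 12], [3, 3, 6, 6], [3, 4, 4, 6], [4, 4, 4, 4],
    [3, 3, 3, 3, 6], [3, 3, 3, 4, 4], [3, 3, 3, 3, 3, 3]]

theorem sum_one_div_eq_of_mem_vertexCoronaTypes :
    ∀ l ∈ vertexCoronaTypes, (l.map fun x : ℕ => (1 : ℚ) / x).sum = l.length / 2 - 1 := by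
  norm_num [vertexCoronaTypes]

section
variable {n : ℕ} {a : Fin n → ℕ}

theorem two_lt_of_sum_one_div_eq (ha : ∀ i, 0 < a i) (h : ∑ i, (1 : ℚ) / a i = n / 2 - 1) :
    2 < n := by
  rcases n with _ | n
  · norm_num at h
  · have : (0 : ℚ) < ∑ i, (1 : ℚ) / a i :=
      sum_pos (fun i _ => by have := ha i; positivity) univ_nonempty
    have : (2 : ℚ) < (n + 1 : ℕ) := by push_cast at h ⊢; linarith
    exact_mod_cast this

variable (ha3 : ∀ i, 3 ≤ a i) (hmono : Monotone a) (h : ∑ i, (1 : ℚ) / a i = n / 2 - 1)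
include ha3 hmono h

theorem mul_le_of_sum_one_div_eq (k : Fin n) :
    (a k : ℤ) * (3 * n - 6 - 2 * k) ≤ 6 * (n - k) := by
  have hak : (0 : ℚ) < a k := by have := ha3 k; positivity
  have := h ▸ sum_one_div_le_of_monotone (a := fun i => (a i : ℚ)) three_pos
    (fun i => by exact_mod_cast ha3 i) (Nat.mono_cast.comp hmono) k
  rw [div_add_div _ _ three_ne_zero hak.ne', le_div_iff₀ (by positivity)] at this
  exact_mod_cast (by linarith : (a k : ℚ) * (3 * n - 6 - 2 * k) ≤ 6 * (n - k))

theorem le_six_of_sum_one_div_eq : n ≤ 6 := by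
  have hn := two_lt_of_sum_one_div_eq (fun i => (ha3 i).trans_lt' three_pos) h
  have h0 := mul_le_of_sum_one_div_eq ha3 hmono h ⟨0, by omega⟩
  have := ha3 ⟨0, by omega⟩
  simp only [Nat.cast_zero] at h0
  nlinarith

/-- `hc` lives in `ℕ` so that `decide` checks it for numerals; truncated subtraction only makes
it harder to satisfy. -/
theorem le_of_sum_one_div_eq (k : Fin n) {c : ℕ}
    (hc : 6 * (n - k) < (c + 1) * (3 * n - 6 - 2 * k)) : a k ≤ c := by
  have hb := mul_le_of_sum_one_div_eq ha3 hmono h k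
  have hD : 6 + 2 * (k : ℕ) < 3 * n := by
    by_contra! hD
    simp [Nat.sub_sub, Nat.sub_eq_zero_of_le hD] at hc
  rw [Nat.sub_sub] at hc
  zify [hD.le, k.is_lt.le] at hc
  by_contra! hlt
  have : ((c : ℤ) + 1) * (3 * n - 6 - 2 * k) ≤ a k * (3 * n - 6 - 2 * k) := by
    gcongr
    · linarith
    · exact_mod_cast hlt
  linarith

end

theorem ofFn_mem_vertexCoronaTypes_three {a : Fin 3 → ℕ} (ha3 : ∀ i, 3 ≤ a i)
    (hmono : Monotone a) (h : ∑ i, (1 : ℚ) / a i = 3 / 2 - 1) :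
    List.ofFn a ∈ vertexCoronaTypes := by
  have h0 : a 0 ≤ 6 := le_of_sum_one_div_eq ha3 hmono h 0 (by decide)
  have h1 : a 1 ≤ 12 := le_of_sum_one_div_eq ha3 hmono h 1 (by decide)
  have h01 := hmono (show (0 : Fin 3) ≤ 1 by decide)
  have h12 := hmono (show (1 : Fin 3) ≤ 2 by decide)
  have hlast : (a 2 : ℚ) ≠ 0 := by have := ha3 2; positivity
  rw [Fin.sum_univ_three] at h
  rw [show List.ofFn a = [a 0, a 1, a 2] from rfl]
  have := ha3 0
  interval_cases a 0 <;> interval_cases a 1 <;>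
    field_simp at h <;> ring_nf at h <;> norm_cast at h <;>
    simp only [vertexCoronaTypes, List.mem_cons, List.cons.injEq, List.not_mem_nil, reduceCtorEq,
      Nat.reduceEqDiff, and_false, false_and, and_true, true_and, or_false, false_or] <;> omega

theorem ofFn_mem_vertexCoronaTypes_four {a : Fin 4 → ℕ} (ha3 : ∀ i, 3 ≤ a i)
    (hmono : Monotone a) (h : ∑ i, (1 : ℚ) / a i = 4 / 2 - 1) :
    List.ofFn a ∈ vertexCoronaTypes := by
  have h0 : a 0 ≤ 4 := le_of_sum_one_div_eq ha3 hmono h 0 (by decide)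
  have h1 : a 1 ≤ 4 := le_of_sum_one_div_eq ha3 hmono h 1 (by decide)
  have h2 : a 2 ≤ 6 := le_of_sum_one_div_eq ha3 hmono h 2 (by decide)
  have h01 := hmono (show (0 : Fin 4) ≤ 1 by decide)
  have h12 := hmono (show (1 : Fin 4) ≤ 2 by decide)
  have h23 := hmono (show (2 : Fin 4) ≤ 3 by decide)
  have hlast : (a 3 : ℚ) ≠ 0 := by have := ha3 3; positivity
  rw [Fin.sum_univ_four] at h
  rw [show List.ofFn a = [a 0, a 1, a 2, a 3] from rfl]
  have := ha3 0
  interval_cases a 0 <;> interval_cases a 1 <;> interval_cases a 2 <;>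
    field_simp at h <;> ring_nf at h <;> norm_cast at h <;>
    simp only [vertexCoronaTypes, List.mem_cons, List.cons.injEq, List.not_mem_nil, reduceCtorEq,
      Nat.reduceEqDiff, and_false, false_and, and_true, true_and, or_false, false_or] <;> omega

theorem ofFn_mem_vertexCoronaTypes_five {a : Fin 5 → ℕ} (ha3 : ∀ i, 3 ≤ a i)
    (hmono : Monotone a) (h : ∑ i, (1 : ℚ) / a i = 5 / 2 - 1) :
    List.ofFn a ∈ vertexCoronaTypes := by
  have h0 : a 0 = 3 := (le_of_sum_one_div_eq ha3 hmono h 0 (by decide)).antisymm (ha3 0)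
  have h1 : a 1 = 3 := (le_of_sum_one_div_eq ha3 hmono h 1 (by decide)).antisymm (ha3 1)
  have h2 : a 2 = 3 := (le_of_sum_one_div_eq ha3 hmono h 2 (by decide)).antisymm (ha3 2)
  have h3 : a 3 ≤ 4 := le_of_sum_one_div_eq ha3 hmono h 3 (by decide)
  have h34 := hmono (show (3 : Fin 5) ≤ 4 by decide)
  have hlast : (a 4 : ℚ) ≠ 0 := by have := ha3 4; positivity
  rw [Fin.sum_univ_five, h0, h1, h2] at h
  rw [show List.ofFn a = [a 0, a 1, a 2, a 3, a 4] from rfl]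
  have := ha3 3
  interval_cases a 3 <;> field_simp at h <;> ring_nf at h <;> norm_cast at h <;>
    simp only [vertexCoronaTypes, List.mem_cons, List.cons.injEq, List.not_mem_nil, reduceCtorEq,
      Nat.reduceEqDiff, and_false, false_and, and_true, true_and, or_false, false_or] <;> omega

theorem ofFn_mem_vertexCoronaTypes_six {a : Fin 6 → ℕ} (ha3 : ∀ i, 3 ≤ a i)
    (hmono : Monotone a) (h : ∑ i, (1 : ℚ) / a i = 6 / 2 - 1) :
    List.ofFn a ∈ vertexCoronaTypes := by
  have h3 (i : Fin 6) : a i = 3 :=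
    (le_of_sum_one_div_eq ha3 hmono h i (by revert i; decide)).antisymm (ha3 i)
  simp [List.ofFn_succ, h3, vertexCoronaTypes]

theorem vertex_corona_equation_solutions_general (n : ℕ) (a : Fin n → ℕ)
    (ha3 : ∀ i, 3 ≤ a i) (hmono : Monotone a) :
    (∑ i : Fin n, (1 : ℚ) / (a i : ℚ) = (n : ℚ) / 2 - 1) ↔
      (List.ofFn a = [3, 7, 42] ∨ List.ofFn a = [3, 8, 24] ∨
       List.ofFn a = [3, 9, 18] ∨ List.ofFn a = [3, 10, 15] ∨
       List.ofFn a = [3, 12, 12] ∨ List.ofFn a = [4, 5, 20] ∨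
       List.ofFn a = [4, 6, 12] ∨ List.ofFn a = [4, 8, 8] ∨
       List.ofFn a = [5, 5, 10] ∨ List.ofFn a = [6, 6, 6] ∨
       List.ofFn a = [3, 3, 4, 12] ∨ List.ofFn a = [3, 3, 6, 6] ∨
       List.ofFn a = [3, 4, 4, 6] ∨ List.ofFn a = [4, 4, 4, 4] ∨
       List.ofFn a = [3, 3, 3, 3, 6] ∨ List.ofFn a = [3, 3, 3, 4, 4] ∨
       List.ofFn a = [3, 3, 3, 3, 3, 3]) := by
  suffices (∑ i, (1 : ℚ) / a i = n / 2 - 1) ↔ List.ofFn a ∈ vertexCoronaTypes by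
    simpa only [vertexCoronaTypes, List.mem_cons, List.not_mem_nil, or_false] using this
  constructor
  · intro h
    have hn3 := two_lt_of_sum_one_div_eq (fun i => (ha3 i).trans_lt' three_pos) h
    have hn6 := le_six_of_sum_one_div_eq ha3 hmono h
    interval_cases n
    · exact ofFn_mem_vertexCoronaTypes_three ha3 hmono (by simpa using h)
    · exact ofFn_mem_vertexCoronaTypes_four ha3 hmono (by simpa using h)
    · exact ofFn_mem_vertexCoronaTypes_five ha3 hmono (by simpa using h)
    · exact ofFn_mem_vertexCoronaTypes_six ha3 hmono (by simpa using h)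
  · intro hmem
    simpa [List.map_ofFn, List.sum_ofFn] using sum_one_div_eq_of_mem_vertexCoronaTypes _ hmem

/-- Arithmetic classification of the possible combinatorial types of vertex coronae
in a monocoronal face-to-face planar tiling: the solutions in integers `a i ≥ 3` of
`∑ 1 / a i = n / 2 - 1`. -/
theorem vertex_corona_equation_solutions (n : ℕ) (hn : 1 ≤ n) (a : Fin n → ℕ)
    (ha3 : ∀ i, 3 ≤ a i) (hmono : Monotone a) :
    (∑ i : Fin n, (1 : ℚ) / (a i : ℚ) = (n : ℚ) / 2 - 1) ↔
      (List.ofFn a = [3, 7, 42] ∨ List.ofFn a = [3, 8, 24] ∨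
       List.ofFn a = [3, 9, 18] ∨ List.ofFn a = [3, 10, 15] ∨
       List.ofFn a = [3, 12, 12] ∨ List.ofFn a = [4, 5, 20] ∨
       List.ofFn a = [4, 6, 12] ∨ List.ofFn a = [4, 8, 8] ∨
       List.ofFn a = [5, 5, 10] ∨ List.ofFn a = [6, 6, 6] ∨
       List.ofFn a = [3, 3, 4, 12] ∨ List.ofFn a = [3, 3, 6, 6] ∨
       List.ofFn a = [3, 4, 4, 6] ∨ List.ofFn a = [4, 4, 4, 4] ∨
       List.ofFn a = [3, 3, 3, 3, 6] ∨ List.ofFn a = [3, 3, 3, 4, 4] ∨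
       List.ofFn a = [3, 3, 3, 3, 3, 3]) :=
  vertex_corona_equation_solutions_general n a ha3 hmono
end

section
/- Let n ≥ 1 and let a_1 ≤ a_2 ≤ … ≤ a_n be natural numbers with each a_i ≥ 3. Then ∑_{i=1}^{n} 1/a_i = (n − 1)/2 (as rationals) holds if and only if the tuple (a_1, …, a_n) is one of the following three tuples: (3,6), (4,4), (3,3,3). -/
/-!
Every term `1 / aᵢ` is at most `1 / 3`, so `(n - 1) / 2 ≤ n / 3` and `n ≤ 3`. For `n ≤ 1` the
two sides have opposite signs or one is zero; for `n = 3` the bound is attained, forcing all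
`aᵢ = 3`; for `n = 2` the equation is `(a₁ - 2)(a₂ - 2) = 4`.
-/

lemma one_div_le_one_third {k : ℕ} (hk : 3 ≤ k) : (1 : ℚ) / k ≤ 1 / 3 :=
  one_div_le_one_div_of_le (by norm_num) (by exact_mod_cast hk)

lemma length_le_three_of_sum_one_div_eq {l : List ℕ} (h3 : ∀ k ∈ l, 3 ≤ k)
    (hsum : (l.map fun k : ℕ => (1 : ℚ) / k).sum = ((l.length : ℚ) - 1) / 2) :
    l.length ≤ 3 := by
  have hterm : ∀ q ∈ l.map fun k : ℕ => (1 : ℚ) / k, q ≤ 1 / 3 := by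
    simpa only [List.forall_mem_map] using fun k hk => one_div_le_one_third (h3 k hk)
  have hle : ((l.length : ℚ) - 1) / 2 ≤ l.length * (1 / 3) := by
    simpa [← hsum] using List.sum_le_card_nsmul _ _ hterm
  have : (l.length : ℚ) ≤ 3 := by linarith
  exact_mod_cast this

lemma eq_of_one_div_add_one_div_eq_half {x y : ℕ} (hx : 3 ≤ x) (hxy : x ≤ y)
    (h : (1 : ℚ) / x + 1 / y = 1 / 2) : x = 3 ∧ y = 6 ∨ x = 4 ∧ y = 4 := by
  have hxyq : (x : ℚ) * y = 2 * (x + y) := by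
    have hx0 : (x : ℚ) ≠ 0 := Nat.cast_ne_zero.2 (by omega)
    have hy0 : (y : ℚ) ≠ 0 := Nat.cast_ne_zero.2 (by omega)
    field_simp at h
    linarith
  have hxyn : x * y = 2 * (x + y) := by exact_mod_cast hxyq
  -- if `x ≥ 5` then `x * y ≥ 5 * y > 2 * (x + y)`
  have : x ≤ 4 := by nlinarith
  interval_cases x <;> omega

lemma eq_three_of_one_div_eq_one_third {k : ℕ} (h : (1 : ℚ) / k = 1 / 3) : k = 3 := by
  rw [one_div, one_div, inv_inj] at h
  exact_mod_cast h

lemma eq_three_of_one_div_add_one_div_add_one_div_eq_one {x y z : ℕ} (hx : 3 ≤ x) (hy : 3 ≤ y)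
    (hz : 3 ≤ z) (h : (1 : ℚ) / x + 1 / y + 1 / z = 1) : x = 3 ∧ y = 3 ∧ z = 3 := by
  have hx' := one_div_le_one_third hx
  have hy' := one_div_le_one_third hy
  have hz' := one_div_le_one_third hz
  exact ⟨eq_three_of_one_div_eq_one_third (by linarith),
    eq_three_of_one_div_eq_one_third (by linarith), eq_three_of_one_div_eq_one_third (by linarith)⟩

theorem List.sum_one_div_eq_half_length_sub_one_iff {l : List ℕ} (h3 : ∀ k ∈ l, 3 ≤ k)
    (hl : l.SortedLE) :
    (l.map fun k : ℕ => (1 : ℚ) / k).sum = ((l.length : ℚ) - 1) / 2 ↔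
      l = [3, 6] ∨ l = [4, 4] ∨ l = [3, 3, 3] := by
  refine ⟨fun hsum => ?_, by rintro (rfl | rfl | rfl) <;> norm_num⟩
  have hlen := length_le_three_of_sum_one_div_eq h3 hsum
  rcases l with _ | ⟨x, _ | ⟨y, _ | ⟨z, _ | ⟨w, t⟩⟩⟩⟩
  · norm_num at hsum
  · have hx : 3 ≤ x := h3 x (List.mem_singleton_self x)
    norm_num at hsum
    omega
  · obtain ⟨hx, hy⟩ : 3 ≤ x ∧ 3 ≤ y := by simpa using h3
    have hxy : x ≤ y := by simpa using hl.pairwise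
    have h : (1 : ℚ) / x + 1 / y = 1 / 2 := by norm_num at hsum ⊢; linarith
    rcases eq_of_one_div_add_one_div_eq_half hx hxy h with ⟨rfl, rfl⟩ | ⟨rfl, rfl⟩ <;> simp
  · obtain ⟨hx, hy, hz⟩ : 3 ≤ x ∧ 3 ≤ y ∧ 3 ≤ z := by simpa using h3
    have h : (1 : ℚ) / x + 1 / y + 1 / z = 1 := by norm_num at hsum ⊢; linarith
    obtain ⟨rfl, rfl, rfl⟩ := eq_three_of_one_div_add_one_div_add_one_div_eq_one hx hy hz h
    simp
  · simp only [List.length_cons] at hlen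
    omega

theorem vertex_corona_equation_solutions_nonFaceToFace_general (n : ℕ)
    (a : Fin n → ℕ) (ha3 : ∀ i, 3 ≤ a i) (hmono : Monotone a) :
    (∑ i : Fin n, (1 : ℚ) / (a i : ℚ) = ((n : ℚ) - 1) / 2) ↔
      (List.ofFn a = [3, 6] ∨ List.ofFn a = [4, 4] ∨ List.ofFn a = [3, 3, 3]) := by
  have h3 : ∀ k ∈ List.ofFn a, 3 ≤ k := by simpa [List.mem_ofFn] using ha3
  have := List.sum_one_div_eq_half_length_sub_one_iff h3 (List.sortedLE_ofFn_iff.2 hmono)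
  rwa [List.map_ofFn, List.sum_ofFn, List.length_ofFn] at this

/-- Arithmetic classification of the possible combinatorial types of vertex coronae
in a monocoronal non-face-to-face planar tiling: the solutions in integers `a i ≥ 3`
of `∑ 1 / a i = (n - 1) / 2`. -/
theorem vertex_corona_equation_solutions_nonFaceToFace (n : ℕ) (hn : 1 ≤ n)
    (a : Fin n → ℕ) (ha3 : ∀ i, 3 ≤ a i) (hmono : Monotone a) :
    (∑ i : Fin n, (1 : ℚ) / (a i : ℚ) = ((n : ℚ) - 1) / 2) ↔
      (List.ofFn a = [3, 6] ∨ List.ofFn a = [4, 4] ∨ List.ofFn a = [3, 3, 3]) :=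
  vertex_corona_equation_solutions_nonFaceToFace_general n a ha3 hmono
end

section
/- For every dimension d ≥ 2 there exists a face-to-face tiling of d-dimensional Euclidean space by convex polytopes that is monocoronal up to rigid motions and is exactly ⌈(d+1)/2⌉-periodic: the set of vectors v such that translation by v is a symmetry of the tiling spans a real subspace of dimension exactly ⌈(d+1)/2⌉. -/
noncomputable section

open Set

abbrev Ed (d : ℕ) := EuclideanSpace ℝ (Fin d)

variable (d : ℕ)

/-- A convex polytope: a compact convex subset with nonempty interior and finitely
many extreme points. -/
def IsConvexPolytope (P : Set (Ed d)) : Prop :=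
  IsCompact P ∧ Convex ℝ P ∧ (interior P).Nonempty ∧ (Set.extremePoints ℝ P).Finite

/-- A tiling of `ℝ^d` by convex polytopes. -/
def IsTiling (T : Set (Set (Ed d))) : Prop :=
  T.Countable ∧ (∀ P ∈ T, IsConvexPolytope d P) ∧ (⋃₀ T = Set.univ) ∧
    T.Pairwise fun P Q => Disjoint (interior P) (interior Q)

/-- A vertex of a tiling: an extreme point of at least one tile. -/
def IsVertex (T : Set (Set (Ed d))) (x : Ed d) : Prop :=
  ∃ P ∈ T, x ∈ Set.extremePoints ℝ P

/-- An isometry is orientation preserving if its linear part has determinant `1`. -/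
def OrientationPreserving (f : Ed d ≃ᵃⁱ[ℝ] Ed d) : Prop :=
  LinearMap.det (f.linearIsometryEquiv.toLinearEquiv : Ed d →ₗ[ℝ] Ed d) = 1

/-- Monocoronal up to congruence: any two vertex coronae are congruent. -/
def MonocoronalC (T : Set (Set (Ed d))) : Prop :=
  ∀ x y : Ed d, IsVertex d T x → IsVertex d T y →
    ∃ f : Ed d ≃ᵃⁱ[ℝ] Ed d, f x = y ∧
      (fun P => f '' P) '' {P | P ∈ T ∧ x ∈ P} = {P | P ∈ T ∧ y ∈ P}

/-- Monocoronal up to rigid motions: any two vertex coronae are directly congruent. -/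
def MonocoronalRM (T : Set (Set (Ed d))) : Prop :=
  ∀ x y : Ed d, IsVertex d T x → IsVertex d T y →
    ∃ f : Ed d ≃ᵃⁱ[ℝ] Ed d, OrientationPreserving d f ∧ f x = y ∧
      (fun P => f '' P) '' {P | P ∈ T ∧ x ∈ P} = {P | P ∈ T ∧ y ∈ P}

/-- A tiling is face-to-face if the intersection of any two distinct tiles is an
extreme subset of each of them. -/
def FaceToFace (T : Set (Set (Ed d))) : Prop :=
  ∀ P ∈ T, ∀ Q ∈ T, P ≠ Q → IsExtreme ℝ P (P ∩ Q) ∧ IsExtreme ℝ Q (P ∩ Q)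

/-- A symmetry of a tiling: an isometry mapping the set of tiles onto itself. -/
def IsSymmetry (T : Set (Set (Ed d))) (f : Ed d ≃ᵃⁱ[ℝ] Ed d) : Prop :=
  (fun P => f '' P) '' T = T

/-- The set of translation vectors of a tiling. -/
def periodVectors (T : Set (Set (Ed d))) : Set (Ed d) :=
  {v | IsSymmetry d T (AffineIsometryEquiv.constVAdd ℝ (Ed d) v)}

/-!
Put `j = d - ⌈(d + 1) / 2⌉`, so that `2 * j < d`, and let `profile : ℝ → ℝ` interpolate
linearly the integer sequence `stair` with values `…, 2, 1, 1, 0, 0, 1, 1, 2, …` at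
`…, -3, …, 4, …`, whose steps alternate between `0` and `±1`. The map adding
`profile (x (c - j))` to every coordinate `j ≤ c < 2 * j` is affine on each unit cube of the
lattice `ℤ^d`, so the images of these cubes form a face-to-face tiling by parallelepipeds whose
vertices are the images of `ℤ^d`.

Near an integer the profile is flat on one side and has slope `±1` on the other, so its germs at
any two integers agree up to a reflection in each direction. Hence any two vertex coronae are
exchanged by a coordinatewise sign change followed by a translation, and flipping the free
coordinate `2 * j` if necessary makes it a rigid motion.

Integer translations along the `d - j` coordinates `c ≥ j` are periods. Conversely a period moves
each coordinate `i < j` by an integer `V`, and comparing the slopes of a tile and of its translate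
in the `(i, i + j)`-plane gives `stairStep (n + V) = stairStep n` for all `n`, whence `V = 0`.
-/

variable {d}

section Convex

variable {𝕜 E F : Type*} [Ring 𝕜] [PartialOrder 𝕜] [IsOrderedRing 𝕜]
  [AddCommGroup E] [Module 𝕜 E] [AddCommGroup F] [Module 𝕜 F]

theorem AffineEquiv.isExtreme_image (f : E ≃ᵃ[𝕜] F) {A B : Set E} (h : IsExtreme 𝕜 A B) :
    IsExtreme 𝕜 (f '' A) (f '' B) := by
  refine ⟨image_mono h.subset, ?_⟩
  rintro _ ⟨x₁, hx₁, rfl⟩ _ ⟨x₂, hx₂, rfl⟩ _ ⟨x, hx, rfl⟩ hseg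
  rw [← f.coe_toAffineMap, ← image_openSegment, f.coe_toAffineMap, f.injective.mem_set_image]
    at hseg
  exact mem_image_of_mem f (h.left_mem_of_mem_openSegment hx₁ hx₂ hx hseg)

theorem AffineEquiv.image_extremePoints (f : E ≃ᵃ[𝕜] F) (A : Set E) :
    f '' A.extremePoints 𝕜 = (f '' A).extremePoints 𝕜 := by
  refine Subset.antisymm ?_ fun y hy => ?_
  · rintro _ ⟨x, hx, rfl⟩
    simpa using f.isExtreme_image (isExtreme_singleton.2 hx)
  · have := f.symm.isExtreme_image (isExtreme_singleton.2 hy)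
    simp only [image_singleton, image_image, AffineEquiv.symm_apply_apply, image_id'] at this
    exact ⟨_, isExtreme_singleton.1 this, f.apply_symm_apply y⟩

end Convex

theorem isExtreme_pi {𝕜 ι : Type*} {M : ι → Type*} [Semiring 𝕜] [PartialOrder 𝕜]
    [∀ i, AddCommMonoid (M i)] [∀ i, Module 𝕜 (M i)] {s t : ∀ i, Set (M i)}
    (h : ∀ i, IsExtreme 𝕜 (s i) (t i)) : IsExtreme 𝕜 (univ.pi s) (univ.pi t) := by
  refine ⟨pi_mono fun i _ => (h i).subset, ?_⟩
  rintro x₁ hx₁ x₂ hx₂ x hx ⟨a, b, ha, hb, hab, rfl⟩ i -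
  exact (h i).left_mem_of_mem_openSegment (hx₁ i trivial) (hx₂ i trivial) (hx i trivial)
    ⟨a, b, ha, hb, hab, rfl⟩

theorem isExtreme_of_subset_extremePoints {𝕜 E : Type*} [Semiring 𝕜] [PartialOrder 𝕜]
    [AddCommMonoid E] [Module 𝕜 E] {A B : Set E} (h : B ⊆ A.extremePoints 𝕜) :
    IsExtreme 𝕜 A B :=
  ⟨h.trans extremePoints_subset, fun _ hx₁ _ hx₂ _ hz hseg => (h hz).2 hx₁ hx₂ hseg ▸ hz⟩

theorem eq_of_mem_Icc_of_eq_add_one {a z z' : ℝ} (h : z ∈ Icc a (a + 1))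
    (h' : z' ∈ Icc a (a + 1)) (hz : z' = z + 1) : z = a := by
  linarith [h.1, h'.2]

namespace ShearedCubes

/-! ### Unit cubes -/

section UnitCube

variable {ι : Type*}

def unitCube (k : ι → ℤ) : Set (ι → ℝ) := univ.pi fun c => Icc (k c : ℝ) (k c + 1)

theorem isCompact_unitCube (k : ι → ℤ) : IsCompact (unitCube k) :=
  isCompact_univ_pi fun _ => isCompact_Icc

theorem convex_unitCube (k : ι → ℤ) : Convex ℝ (unitCube k) :=
  convex_pi fun _ _ => convex_Icc _ _

theorem mem_unitCube_floor (x : ι → ℝ) : x ∈ unitCube fun c => ⌊x c⌋ :=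
  fun _ _ => ⟨Int.floor_le _, (Int.lt_floor_add_one _).le⟩

theorem interior_unitCube [Finite ι] (k : ι → ℤ) :
    interior (unitCube k) = univ.pi fun c => Ioo (k c : ℝ) (k c + 1) := by
  simp only [unitCube, interior_pi_set finite_univ, interior_Icc]

theorem interior_unitCube_nonempty [Finite ι] (k : ι → ℤ) : (interior (unitCube k)).Nonempty :=
  ⟨fun c => k c + 1 / 2, by rw [interior_unitCube]; exact fun c _ => ⟨by linarith, by linarith⟩⟩

theorem disjoint_interior_unitCube [Finite ι] {k k' : ι → ℤ} (h : k ≠ k') :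
    Disjoint (interior (unitCube k)) (interior (unitCube k')) := by
  obtain ⟨c, hc⟩ := Function.ne_iff.1 h
  rw [interior_unitCube, interior_unitCube, Set.disjoint_left]
  intro x hx hx'
  obtain ⟨h₁, h₂⟩ := hx c trivial
  obtain ⟨h₁', h₂'⟩ := hx' c trivial
  have : k c < k' c + 1 := by exact_mod_cast h₁.trans h₂'
  have : k' c < k c + 1 := by exact_mod_cast h₁'.trans h₂
  omega

theorem extremePoints_unitCube (k : ι → ℤ) :
    (unitCube k).extremePoints ℝ = univ.pi fun c => {(k c : ℝ), (k c + 1 : ℝ)} := by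
  simp only [unitCube, extremePoints_pi]
  exact pi_congr rfl fun c _ => extremePoints_Icc (by linarith)

theorem exists_intCast_of_mem_extremePoints_unitCube {k : ι → ℤ} {q : ι → ℝ}
    (hq : q ∈ (unitCube k).extremePoints ℝ) : ∃ u : ι → ℤ, q = fun c => (u c : ℝ) := by
  rw [extremePoints_unitCube] at hq
  choose u hu using fun c => show ∃ z : ℤ, q c = z from
    (hq c trivial).elim (fun h => ⟨k c, h⟩) fun h => ⟨k c + 1, by push_cast; exact h⟩
  exact ⟨u, funext hu⟩

theorem isExtreme_Icc_inter_Icc_intCast (m n : ℤ) :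
    IsExtreme ℝ (Icc (m : ℝ) (m + 1)) (Icc (m : ℝ) (m + 1) ∩ Icc (n : ℝ) (n + 1)) := by
  obtain rfl | hmn := eq_or_ne n m
  · rw [inter_self]
  refine isExtreme_of_subset_extremePoints fun z ⟨⟨h₁, h₂⟩, h₃, h₄⟩ => ?_
  rw [extremePoints_Icc (by linarith), mem_insert_iff, mem_singleton_iff]
  rcases hmn.lt_or_gt with h | h
  · have : (n : ℝ) + 1 ≤ m := by exact_mod_cast h
    left; linarith
  · have : (m : ℝ) + 1 ≤ n := by exact_mod_cast h
    right; linarith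

theorem isExtreme_unitCube_inter (k k' : ι → ℤ) :
    IsExtreme ℝ (unitCube k) (unitCube k ∩ unitCube k') := by
  rw [unitCube, unitCube, ← pi_inter_distrib]
  exact isExtreme_pi fun c => isExtreme_Icc_inter_Icc_intCast (k c) (k' c)

theorem image_add_intCast_unitCube (k t : ι → ℤ) :
    (fun q => q + fun c => (t c : ℝ)) '' unitCube k = unitCube (k + t) := by
  rw [image_add_right]
  ext q
  simp only [unitCube, mem_preimage, mem_univ_pi, mem_Icc, Pi.add_apply, Pi.neg_apply]
  push_cast
  refine forall_congr' fun c => ?_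
  constructor <;> rintro ⟨h₁, h₂⟩ <;> constructor <;> linarith

def latticeReflect (ε : ι → ℤˣ) (u v : ι → ℤ) (q : ι → ℝ) : ι → ℝ :=
  fun c => (ε c : ℤ) * (q c - u c) + v c

theorem latticeReflect_latticeReflect (ε : ι → ℤˣ) (u v : ι → ℤ) (q : ι → ℝ) :
    latticeReflect ε v u (latticeReflect ε u v q) = q := by
  funext c
  rcases Int.units_eq_one_or (ε c) with h | h <;> simp [latticeReflect, h]

theorem latticeReflect_intCast (ε : ι → ℤˣ) (u v : ι → ℤ) :
    latticeReflect ε u v (fun c => (u c : ℝ)) = fun c => (v c : ℝ) := by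
  funext c
  simp [latticeReflect]

theorem exists_latticeReflect_image_unitCube (ε : ι → ℤˣ) (u v k : ι → ℤ) :
    ∃ k', latticeReflect ε u v '' unitCube k = unitCube k' := by
  refine ⟨fun c => if ε c = 1 then k c - u c + v c else v c + u c - k c - 1, ?_⟩
  rw [image_eq_preimage_of_inverse (latticeReflect_latticeReflect ε u v)
    (latticeReflect_latticeReflect ε v u)]
  ext q
  simp only [unitCube, mem_preimage, mem_univ_pi, mem_Icc, latticeReflect]
  refine forall_congr' fun c => ?_
  have hne : (-1 : ℤˣ) ≠ 1 := by decide
  rcases Int.units_eq_one_or (ε c) with h | h <;> simp only [h, if_true, if_neg hne] <;>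
    push_cast <;> constructor <;> rintro ⟨h₁, h₂⟩ <;> constructor <;> linarith

end UnitCube

/-! ### The profile -/

def stair (n : ℤ) : ℤ := if 0 ≤ n then n / 2 else (1 - n) / 2

def stairStep (n : ℤ) : ℤ := stair (n + 1) - stair n

def stepSign (m : ℤ) : ℤˣ := if 0 < m then 1 else -1

def paritySign (m n : ℤ) : ℤˣ := if Even (m + n) then 1 else -1

theorem stairStep_of_even {n : ℤ} (h : Even n) : stairStep n = 0 := by
  obtain ⟨r, rfl⟩ := h
  simp only [stairStep, stair]
  split_ifs <;> omega

theorem stairStep_of_odd {n : ℤ} (h : Odd n) : stairStep n = stepSign n := by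
  obtain ⟨r, rfl⟩ := h
  simp only [stairStep, stair, stepSign]
  split_ifs <;> simp <;> omega

theorem stairStep_sub_one_of_even {n : ℤ} (h : Even n) : stairStep (n - 1) = stepSign n := by
  obtain ⟨r, rfl⟩ := h
  simp only [stairStep, stair, stepSign]
  split_ifs <;> simp <;> omega

theorem exists_stairStep_add_ne {V : ℤ} (hV : V ≠ 0) : ∃ n, stairStep (n + V) ≠ stairStep n := by
  obtain ⟨r, rfl⟩ | ⟨r, rfl⟩ := Int.even_or_odd V
  · refine ⟨if 0 < r then -1 else 1, ?_⟩
    simp only [stairStep, stair]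
    split_ifs <;> omega
  · refine ⟨0, ?_⟩
    simp only [stairStep, stair]
    split_ifs <;> omega

def profile (x : ℝ) : ℝ := stair ⌊x⌋ + (x - ⌊x⌋) * stairStep ⌊x⌋

theorem profile_intCast_add (n : ℤ) {t : ℝ} (ht₀ : 0 ≤ t) (ht₁ : t ≤ 1) :
    profile (n + t) = stair n + t * stairStep n := by
  obtain ht₁ | rfl := ht₁.lt_or_eq
  · have : ⌊(n : ℝ) + t⌋ = n := by
      rw [Int.floor_intCast_add, Int.floor_eq_zero_iff.2 ⟨ht₀, ht₁⟩, add_zero]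
    simp [profile, this]
  · have : ⌊(n : ℝ) + 1⌋ = n + 1 := by exact_mod_cast Int.floor_intCast (n + 1)
    simp [profile, this, stairStep]

theorem profile_intCast (n : ℤ) : profile n = stair n := by
  simpa using profile_intCast_add n le_rfl zero_le_one

theorem profile_intCast_add_one_sub (n : ℤ) : profile (n + 1) - profile n = stairStep n := by
  rw [profile_intCast_add n zero_le_one le_rfl, profile_intCast]
  ring

theorem profile_add_sub (m : ℤ) {t : ℝ} (ht : |t| ≤ 1) :
    profile (m + t) - profile m = (stepSign m : ℤ) * if Even m then min t 0 else max t 0 := by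
  rw [abs_le] at ht
  rw [profile_intCast]
  rcases le_total 0 t with h | h
  · rw [profile_intCast_add m h ht.2]
    split_ifs with hm
    · simp [stairStep_of_even hm, min_eq_right h]
    · simp [stairStep_of_odd (Int.not_even_iff_odd.1 hm), max_eq_left h, mul_comm]
  · have := profile_intCast_add (m - 1) (t := 1 + t) (by linarith) (by linarith)
    push_cast at this
    have hstep : (stair m : ℝ) = stair (m - 1) + stairStep (m - 1) := by simp [stairStep]
    rw [show (m : ℝ) + t = (m - 1) + (1 + t) by ring, this, hstep]
    split_ifs with hm
    · simp [stairStep_sub_one_of_even hm, min_eq_left h]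
      ring
    · have : Even (m - 1) := by simpa [parity_simps] using hm
      simp [stairStep_of_even this, max_eq_right h]

theorem profile_reflect (m n : ℤ) {t : ℝ} (ht : |t| ≤ 1) :
    profile (n + (paritySign m n : ℤ) * t) - profile n =
      ((paritySign m n * stepSign m * stepSign n : ℤˣ) : ℤ) * (profile (m + t) - profile m) := by
  have hεt : |((paritySign m n : ℤ) : ℝ) * t| ≤ 1 := by
    rcases Int.units_eq_one_or (paritySign m n) with h | h <;> simpa [h] using ht
  rw [profile_add_sub m ht, profile_add_sub n hεt]
  have hsq : ((stepSign m : ℤ) : ℝ) * (stepSign m : ℤ) = 1 := by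
    rcases Int.units_eq_one_or (stepSign m) with h | h <;> simp [h]
  rcases le_total 0 t with h | h <;>
  obtain hm | hm := Int.even_or_odd m <;> obtain hn | hn := Int.even_or_odd n <;>
  simp [paritySign, Int.even_add, hm, hn, Int.not_even_iff_odd.2, h] <;>
  linear_combination -((stepSign n : ℤ) : ℝ) * t * hsq

/-! ### The sheared cube tiling -/

variable (j : ℕ)

def shearSource (c : Fin d) : Fin d := ⟨c - j, (Nat.sub_le _ _).trans_lt c.isLt⟩

def shearOffset (g : Fin d → ℝ → ℝ) (x : Fin d → ℝ) (c : Fin d) : ℝ :=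
  if j ≤ c ∧ c < 2 * j then g c (x (shearSource j c)) else 0

variable {j} in
theorem shearOffset_of_lt (g : Fin d → ℝ → ℝ) (x : Fin d → ℝ) {i : Fin d} (hi : (i : ℕ) < j) :
    shearOffset j g x i = 0 :=
  if_neg fun h => by omega

variable {j} in
theorem shearOffset_congr (g : Fin d → ℝ → ℝ) {x y : Fin d → ℝ}
    (h : ∀ i : Fin d, (i : ℕ) < j → x i = y i) : shearOffset j g x = shearOffset j g y := by
  funext c
  unfold shearOffset
  split_ifs with hc
  · rw [h _ (by simp only [shearSource]; omega)]
  · rfl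

def shearBy (g : Fin d → ℝ → ℝ) : (Fin d → ℝ) ≃ (Fin d → ℝ) where
  toFun x := x + shearOffset j g x
  invFun x := x - shearOffset j g x
  left_inv x := by
    have : shearOffset j g (x + shearOffset j g x) = shearOffset j g x :=
      shearOffset_congr g fun i hi => by simp [shearOffset_of_lt g x hi]
    simp [this]
  right_inv x := by
    have : shearOffset j g (x - shearOffset j g x) = shearOffset j g x :=
      shearOffset_congr g fun i hi => by simp [shearOffset_of_lt g x hi]
    simp [this]

theorem shearBy_apply (g : Fin d → ℝ → ℝ) (x : Fin d → ℝ) :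
    shearBy j g x = x + shearOffset j g x := rfl

def linearShear (a : Fin d → ℝ) : (Fin d → ℝ) ≃ₗ[ℝ] (Fin d → ℝ) :=
  { shearBy j fun c t => a c * t with
    map_add' x y := by
      ext c
      simp only [Equiv.toFun_as_coe, shearBy_apply, shearOffset, Pi.add_apply]
      split_ifs <;> ring
    map_smul' r x := by
      ext c
      simp only [Equiv.toFun_as_coe, shearBy_apply, shearOffset, Pi.add_apply,
        Pi.smul_apply, smul_eq_mul, RingHom.id_apply]
      split_ifs <;> ring }

def affineShear (a b : Fin d → ℝ) : (Fin d → ℝ) ≃ᵃ[ℝ] (Fin d → ℝ) :=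
  { shearBy j fun c t => a c * t + b c with
    linear := linearShear j a
    map_vadd' x v := by
      ext c
      simp only [Equiv.toFun_as_coe, shearBy_apply, shearOffset, linearShear, vadd_eq_add,
        Pi.add_apply, LinearEquiv.coe_mk, LinearMap.coe_mk, AddHom.coe_mk]
      split_ifs <;> ring }

def shear : (Fin d → ℝ) ≃ Ed d := (shearBy j fun _ => profile).trans (WithLp.equiv 2 _).symm

theorem shear_eq_toLp (x : Fin d → ℝ) :
    shear j x = WithLp.toLp 2 (shearBy j (fun _ => profile) x) := rfl

theorem shear_apply (x : Fin d → ℝ) (c : Fin d) :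
    shear j x c = x c + shearOffset j (fun _ => profile) x c := rfl

theorem shear_symm_apply (p : Ed d) (c : Fin d) :
    (shear j).symm p c = p c - shearOffset j (fun _ => profile) p.ofLp c := rfl

def cubeShear (k : Fin d → ℤ) : (Fin d → ℝ) ≃ᵃ[ℝ] Ed d :=
  (affineShear j (fun c => stairStep (k (shearSource j c))) fun c =>
      stair (k (shearSource j c)) - k (shearSource j c) * stairStep (k (shearSource j c))).trans
    (WithLp.linearEquiv 2 ℝ (Fin d → ℝ)).symm.toAffineEquiv

theorem cubeShear_apply (k : Fin d → ℤ) (x : Fin d → ℝ) :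
    cubeShear j k x = WithLp.toLp 2 (shearBy j (fun c t => stairStep (k (shearSource j c)) * t +
      (stair (k (shearSource j c)) - k (shearSource j c) * stairStep (k (shearSource j c)))) x) :=
  rfl

theorem eqOn_shear_cubeShear (k : Fin d → ℤ) : EqOn (shear j) (cubeShear j k) (unitCube k) := by
  intro x hx
  rw [cubeShear_apply, shear_eq_toLp, shearBy_apply, shearBy_apply]
  congr 2
  funext c
  unfold shearOffset
  split_ifs
  · set i := shearSource j c
    obtain ⟨h₀, h₁⟩ := hx i trivial
    have := profile_intCast_add (k i) (t := x i - k i) (by linarith) (by linarith)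
    rw [add_sub_cancel] at this
    dsimp only
    rw [this]
    ring
  · rfl

def tile (k : Fin d → ℤ) : Set (Ed d) := shear j '' unitCube k

def tiling : Set (Set (Ed d)) := range (tile j)

theorem tile_eq_image_cubeShear (k : Fin d → ℤ) : tile j k = cubeShear j k '' unitCube k :=
  (eqOn_shear_cubeShear j k).image_eq

theorem shear_mem_tile_iff {x : Fin d → ℝ} {k : Fin d → ℤ} :
    shear j x ∈ tile j k ↔ x ∈ unitCube k :=
  (shear j).injective.mem_set_image

theorem interior_tile (k : Fin d → ℤ) :
    interior (tile j k) = shear j '' interior (unitCube k) := by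
  rw [tile_eq_image_cubeShear, ← AffineEquiv.coe_toHomeomorphOfFiniteDimensional,
    ← Homeomorph.image_interior, AffineEquiv.coe_toHomeomorphOfFiniteDimensional]
  exact ((eqOn_shear_cubeShear j k).mono interior_subset).image_eq.symm

theorem isConvexPolytope_tile (k : Fin d → ℤ) : IsConvexPolytope d (tile j k) := by
  refine ⟨?_, ?_, ?_, ?_⟩
  · rw [tile_eq_image_cubeShear]
    exact (isCompact_unitCube k).image (cubeShear j k).toAffineMap.continuous_of_finiteDimensional
  · rw [tile_eq_image_cubeShear]
    exact (convex_unitCube k).affine_image (cubeShear j k).toAffineMap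
  · rw [interior_tile]
    exact (interior_unitCube_nonempty k).image _
  · rw [tile_eq_image_cubeShear, ← AffineEquiv.image_extremePoints, extremePoints_unitCube]
    exact (Finite.pi fun c => toFinite _).image _

theorem isTiling_tiling : IsTiling d (tiling j) := by
  refine ⟨countable_range _, forall_mem_range.2 (isConvexPolytope_tile j), ?_, ?_⟩
  · refine sUnion_eq_univ_iff.2 fun p => ⟨_, mem_range_self fun c => ⌊(shear j).symm p c⌋, ?_⟩
    exact ⟨_, mem_unitCube_floor _, (shear j).apply_symm_apply p⟩
  · rintro _ ⟨k, rfl⟩ _ ⟨k', rfl⟩ hne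
    rw [interior_tile, interior_tile, disjoint_image_iff (shear j).injective]
    exact disjoint_interior_unitCube fun h => hne (h ▸ rfl)

theorem tile_inter_tile (k k' : Fin d → ℤ) :
    tile j k ∩ tile j k' = cubeShear j k '' (unitCube k ∩ unitCube k') := by
  rw [tile, tile, ← image_inter (shear j).injective]
  exact ((eqOn_shear_cubeShear j k).mono inter_subset_left).image_eq

theorem faceToFace_tiling : FaceToFace d (tiling j) := by
  rintro _ ⟨k, rfl⟩ _ ⟨k', rfl⟩ -
  refine ⟨?_, ?_⟩
  · rw [tile_inter_tile, tile_eq_image_cubeShear]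
    exact (cubeShear j k).isExtreme_image (isExtreme_unitCube_inter k k')
  · rw [inter_comm, tile_inter_tile, tile_eq_image_cubeShear]
    exact (cubeShear j k').isExtreme_image (isExtreme_unitCube_inter k' k)

/-! ### Vertex coronae -/

def signFlip (ε : Fin d → ℤˣ) : Ed d ≃ₗᵢ[ℝ] Ed d :=
  LinearIsometryEquiv.piLpCongrRight 2 fun c =>
    if ε c = 1 then LinearIsometryEquiv.refl ℝ ℝ else LinearIsometryEquiv.neg ℝ

theorem signFlip_apply (ε : Fin d → ℤˣ) (p : Ed d) (c : Fin d) :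
    signFlip ε p c = (ε c : ℤ) * p c := by
  rcases Int.units_eq_one_or (ε c) with h | h <;> simp [signFlip, h]

theorem det_signFlip (ε : Fin d → ℤˣ) :
    LinearMap.det ((signFlip ε).toLinearEquiv : Ed d →ₗ[ℝ] Ed d) = ∏ c, ((ε c : ℤ) : ℝ) := by
  classical
  rw [← LinearMap.det_conj _ (WithLp.linearEquiv 2 ℝ (Fin d → ℝ)),
    ← Matrix.det_diagonal, ← LinearMap.det_toLin']
  congr 1
  ext x c
  simp [signFlip_apply, Matrix.mulVec_diagonal, Pi.single_apply]

theorem exists_eq_shear_of_isVertex {x : Ed d} (hx : IsVertex d (tiling j) x) :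
    ∃ u : Fin d → ℤ, x = shear j fun c => (u c : ℝ) := by
  obtain ⟨_, ⟨k, rfl⟩, hx⟩ := hx
  rw [tile_eq_image_cubeShear, ← AffineEquiv.image_extremePoints] at hx
  obtain ⟨q, hq, rfl⟩ := hx
  obtain ⟨u, rfl⟩ := exists_intCast_of_mem_extremePoints_unitCube hq
  exact ⟨u, (eqOn_shear_cubeShear j k (extremePoints_subset hq)).symm⟩

def localSign (u v : Fin d → ℤ) (c : Fin d) : ℤˣ :=
  if (c : ℕ) < j then paritySign (u c) (v c)
  else if (c : ℕ) < 2 * j then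
    paritySign (u (shearSource j c)) (v (shearSource j c)) * stepSign (u (shearSource j c)) *
      stepSign (v (shearSource j c))
  else 1

/-- The free coordinate `2 * j` corrects the product of the signs to `1`. -/
def coronaSign (hj : 2 * j < d) (u v : Fin d → ℤ) : Fin d → ℤˣ :=
  localSign j u v * Pi.mulSingle ⟨2 * j, hj⟩ (∏ c, localSign j u v c)⁻¹

theorem prod_coronaSign (hj : 2 * j < d) (u v : Fin d → ℤ) : ∏ c, coronaSign j hj u v c = 1 := by
  simp [coronaSign, Finset.prod_mul_distrib, Finset.prod_pi_mulSingle']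

theorem coronaSign_of_lt (hj : 2 * j < d) (u v : Fin d → ℤ) {c : Fin d}
    (hc : (c : ℕ) < 2 * j) : coronaSign j hj u v c = localSign j u v c := by
  have : c ≠ ⟨2 * j, hj⟩ := fun h => by simp [h] at hc
  simp [coronaSign, Pi.mulSingle_eq_of_ne this]

def coronaIso (hj : 2 * j < d) (u v : Fin d → ℤ) : Ed d ≃ᵃⁱ[ℝ] Ed d :=
  AffineIsometryEquiv.mk'
    (fun p => signFlip (coronaSign j hj u v) (p - shear j fun c => (u c : ℝ)) +
      shear j fun c => (v c : ℝ))
    (signFlip (coronaSign j hj u v)) (shear j fun c => (u c : ℝ)) fun p => by simp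

theorem orientationPreserving_coronaIso (hj : 2 * j < d) (u v : Fin d → ℤ) :
    OrientationPreserving d (coronaIso j hj u v) := by
  rw [OrientationPreserving, coronaIso, AffineIsometryEquiv.linearIsometryEquiv_mk', det_signFlip]
  simpa [Units.coe_prod] using
    congrArg (fun ε : ℤˣ => ((ε : ℤ) : ℝ)) (prod_coronaSign j hj u v)

theorem coronaIso_shear (hj : 2 * j < d) (u v : Fin d → ℤ) {q : Fin d → ℝ}
    (hq : ∀ i : Fin d, (i : ℕ) < j → |q i - u i| ≤ 1) :
    coronaIso j hj u v (shear j q) = shear j (latticeReflect (coronaSign j hj u v) u v q) := by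
  ext c
  simp only [coronaIso, AffineIsometryEquiv.coe_mk', PiLp.add_apply, signFlip_apply,
    PiLp.sub_apply, shear_apply]
  unfold shearOffset
  split_ifs with hc
  · set i := shearSource j c
    have hi : (i : ℕ) < j := by simp only [i, shearSource]; omega
    have hεc :
        coronaSign j hj u v c = paritySign (u i) (v i) * stepSign (u i) * stepSign (v i) := by
      rw [coronaSign_of_lt j hj u v (by omega), localSign, if_neg (by omega), if_pos hc.2]
    have hεi : coronaSign j hj u v i = paritySign (u i) (v i) := by
      rw [coronaSign_of_lt j hj u v (by omega), localSign, if_pos hi]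
    have := profile_reflect (u i) (v i) (hq i hi)
    rw [add_sub_cancel] at this
    simp only [latticeReflect, hεc, hεi]
    rw [add_comm _ (v i : ℝ)]
    linear_combination -this
  · simp [latticeReflect]

theorem coronaIso_image_tile (hj : 2 * j < d) (u v : Fin d → ℤ) {k k' : Fin d → ℤ}
    (hu : (fun c => (u c : ℝ)) ∈ unitCube k)
    (hk : latticeReflect (coronaSign j hj u v) u v '' unitCube k = unitCube k') :
    coronaIso j hj u v '' tile j k = tile j k' := by
  rw [tile, tile, image_image, ← hk, image_image]
  refine EqOn.image_eq fun q hq => coronaIso_shear j hj u v fun i _ => ?_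
  obtain ⟨h₁, h₂⟩ := hq i trivial
  obtain ⟨h₃, h₄⟩ := hu i trivial
  rw [abs_le]
  constructor <;> linarith

theorem monocoronalRM_tiling (hj : 2 * j < d) : MonocoronalRM d (tiling j) := by
  intro x y hx hy
  obtain ⟨u, rfl⟩ := exists_eq_shear_of_isVertex j hx
  obtain ⟨v, rfl⟩ := exists_eq_shear_of_isVertex j hy
  set ε := coronaSign j hj u v
  refine ⟨coronaIso j hj u v, orientationPreserving_coronaIso j hj u v, ?_, ?_⟩
  · simpa [latticeReflect_intCast] using coronaIso_shear j hj u v (q := fun c => u c) (by simp)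
  ext P
  constructor
  · rintro ⟨_, ⟨⟨k, rfl⟩, hk⟩, rfl⟩
    rw [shear_mem_tile_iff] at hk
    obtain ⟨k', hk'⟩ := exists_latticeReflect_image_unitCube ε u v k
    dsimp only
    rw [coronaIso_image_tile j hj u v hk hk']
    refine ⟨mem_range_self k', (shear_mem_tile_iff j).2 ?_⟩
    rw [← hk', ← latticeReflect_intCast ε u v]
    exact mem_image_of_mem _ hk
  · rintro ⟨⟨k', rfl⟩, hk'⟩
    rw [shear_mem_tile_iff] at hk'
    obtain ⟨k, hk⟩ := exists_latticeReflect_image_unitCube ε v u k'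
    have hu : (fun c => (u c : ℝ)) ∈ unitCube k := by
      rw [← hk, ← latticeReflect_intCast ε v u]
      exact mem_image_of_mem _ hk'
    refine ⟨tile j k, ⟨mem_range_self k, (shear_mem_tile_iff j).2 hu⟩,
      coronaIso_image_tile j hj u v hu ?_⟩
    rw [← hk, image_image]
    simp only [ε, latticeReflect_latticeReflect, image_id']

/-! ### Periods -/

theorem shear_add_intCast (t : Fin d → ℤ) (ht : ∀ i : Fin d, (i : ℕ) < j → t i = 0)
    (q : Fin d → ℝ) :
    shear j (q + fun c => (t c : ℝ)) = WithLp.toLp 2 (fun c => (t c : ℝ)) + shear j q := by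
  have : shearOffset j (fun _ => profile) (q + fun c => (t c : ℝ)) =
      shearOffset j (fun _ => profile) q :=
    shearOffset_congr _ fun i hi => by simp [ht i hi]
  ext c
  simp only [shear_apply, this, PiLp.add_apply, Pi.add_apply]
  ring

theorem toLp_intCast_mem_periodVectors (t : Fin d → ℤ)
    (ht : ∀ i : Fin d, (i : ℕ) < j → t i = 0) :
    WithLp.toLp 2 (fun c => (t c : ℝ)) ∈ periodVectors d (tiling j) := by
  have htile : ∀ k, AffineIsometryEquiv.constVAdd ℝ (Ed d) (WithLp.toLp 2 fun c => (t c : ℝ)) ''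
      tile j k = tile j (k + t) := fun k => by
    rw [tile, tile, ← image_add_intCast_unitCube, image_image, image_image]
    exact image_congr fun q _ => (shear_add_intCast j t ht q).symm
  change (fun P => _ '' P) '' range (tile j) = range (tile j)
  rw [← range_comp, show (fun P => _ '' P) ∘ tile j = tile j ∘ (· + t) from funext htile,
    (add_right_surjective t).range_comp]

theorem exists_unitCube_of_mem_periodVectors {w : Ed d} (hw : w ∈ periodVectors d (tiling j))
    (k : Fin d → ℤ) : ∃ m, ∀ q ∈ unitCube k, (shear j).symm (w + shear j q) ∈ unitCube m := by
  obtain ⟨m, hm⟩ : AffineIsometryEquiv.constVAdd ℝ (Ed d) w '' tile j k ∈ tiling j :=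
    hw ▸ mem_image_of_mem _ (mem_range_self k)
  refine ⟨m, fun q hq => ?_⟩
  obtain ⟨q', hq', hq'q⟩ : w + shear j q ∈ tile j m :=
    hm ▸ mem_image_of_mem _ (mem_image_of_mem _ hq)
  rwa [← hq'q, Equiv.symm_apply_apply]

theorem shear_symm_add_shear_apply_of_lt (w : Ed d) (q : Fin d → ℝ) {i : Fin d}
    (hi : (i : ℕ) < j) : (shear j).symm (w + shear j q) i = w i + q i := by
  simp [shear_symm_apply, shear_apply, shearOffset_of_lt _ _ hi]

theorem shear_symm_add_shear_apply_of_sheared (w : Ed d) (q : Fin d → ℝ) {c : Fin d}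
    (hc : j ≤ (c : ℕ) ∧ (c : ℕ) < 2 * j) :
    (shear j).symm (w + shear j q) c = w c + q c + profile (q (shearSource j c)) -
      profile (w (shearSource j c) + q (shearSource j c)) := by
  have hi : (shearSource j c : ℕ) < j := by simp only [shearSource]; omega
  simp [shear_symm_apply, shear_apply, shearOffset, hc, show ¬j ≤ (shearSource j c : ℕ) by omega]
  ring

theorem exists_mem_Icc_of_mem_periodVectors {w : Ed d} (hw : w ∈ periodVectors d (tiling j))
    {i c : Fin d} (hi : (i : ℕ) < j) (hc : (c : ℕ) = i + j) (n : ℤ) :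
    ∃ m : Fin d → ℤ, ∀ x ∈ Icc (0 : ℝ) 1, ∀ y ∈ Icc (0 : ℝ) 1,
      w i + (n + x) ∈ Icc (m i : ℝ) (m i + 1) ∧
      w c + y + profile (n + x) - profile (w i + (n + x)) ∈ Icc (m c : ℝ) (m c + 1) := by
  have hci : shearSource j c = i := Fin.ext (by simp [shearSource, hc])
  have hic : i ≠ c := Fin.ne_of_val_ne (by omega)
  have hcS : j ≤ (c : ℕ) ∧ (c : ℕ) < 2 * j := by omega
  obtain ⟨m, hm⟩ := exists_unitCube_of_mem_periodVectors j hw (Pi.single i n)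
  refine ⟨m, fun x hx y hy => ?_⟩
  have hq : Pi.single i ((n : ℝ) + x) + Pi.single c y ∈ unitCube (Pi.single i n) := by
    intro c' _
    rcases eq_or_ne c' i with rfl | h₁
    · simpa [hic] using hx
    rcases eq_or_ne c' c with rfl | h₂
    · simpa [hic.symm] using hy
    · simp [h₁, h₂]
  have := hm _ hq
  constructor
  · simpa [shear_symm_add_shear_apply_of_lt j _ _ hi, hic] using this i trivial
  · simpa [shear_symm_add_shear_apply_of_sheared j _ _ hcS, hci, hic, hic.symm] using
      this c trivial

theorem exists_stairStep_add_eq_of_mem_periodVectors (hj : 2 * j ≤ d) {w : Ed d}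
    (hw : w ∈ periodVectors d (tiling j)) {i : Fin d} (hi : (i : ℕ) < j) (n : ℤ) :
    ∃ V : ℤ, w i = V ∧ stairStep (n + V) = stairStep n := by
  set c : Fin d := ⟨i + j, by omega⟩
  obtain ⟨m, hm⟩ := exists_mem_Icc_of_mem_periodVectors j hw hi (c := c) rfl n
  have hIcc₀ : (0 : ℝ) ∈ Icc 0 1 := by simp
  have hIcc₁ : (1 : ℝ) ∈ Icc 0 1 := by simp
  have hmi : w i + n = m i := by
    refine eq_of_mem_Icc_of_eq_add_one (z' := w i + (n + 1)) ?_ (hm 1 hIcc₁ 0 hIcc₀).1 (by ring)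
    simpa using (hm 0 hIcc₀ 0 hIcc₀).1
  have hmc : ∀ x ∈ Icc (0 : ℝ) 1,
      w c + profile (n + x) - profile (w i + (n + x)) = m c := fun x hx =>
    eq_of_mem_Icc_of_eq_add_one (by simpa using (hm x hx 0 hIcc₀).2) (hm x hx 1 hIcc₁).2 (by ring)
  refine ⟨m i - n, by push_cast; linarith, ?_⟩
  have h₀ := hmc 0 hIcc₀
  have h₁ := hmc 1 hIcc₁
  rw [add_sub_cancel, ← Int.cast_inj (α := ℝ), ← profile_intCast_add_one_sub,
    ← profile_intCast_add_one_sub, ← hmi]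
  simp only [add_zero, ← add_assoc] at h₀ h₁
  linarith

theorem apply_eq_zero_of_mem_periodVectors (hj : 2 * j ≤ d) {w : Ed d}
    (hw : w ∈ periodVectors d (tiling j)) {i : Fin d} (hi : (i : ℕ) < j) : w i = 0 := by
  obtain ⟨V, hV, -⟩ := exists_stairStep_add_eq_of_mem_periodVectors j hj hw hi 0
  rw [hV, Int.cast_eq_zero]
  by_contra h
  obtain ⟨n, hn⟩ := exists_stairStep_add_ne h
  obtain ⟨V', hV', hn'⟩ := exists_stairStep_add_eq_of_mem_periodVectors j hj hw hi n
  rw [hV, Int.cast_inj] at hV'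
  exact hn (hV' ▸ hn')

theorem span_periodVectors (hj : 2 * j ≤ d) :
    Submodule.span ℝ (periodVectors d (tiling j)) = Submodule.span ℝ
      (range (EuclideanSpace.basisFun (Fin d) ℝ ∘ fun c : {c : Fin d // ¬(c : ℕ) < j} => c)) := by
  refine le_antisymm (Submodule.span_le.2 fun w hw => ?_) (Submodule.span_mono ?_)
  · rw [← (EuclideanSpace.basisFun (Fin d) ℝ).sum_repr w]
    refine Submodule.sum_mem _ fun c _ => ?_
    by_cases hc : (c : ℕ) < j
    · simp [apply_eq_zero_of_mem_periodVectors j hj hw hc]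
    · exact Submodule.smul_mem _ _ (Submodule.subset_span ⟨⟨c, hc⟩, by simp⟩)
  · rintro _ ⟨⟨c, hc⟩, rfl⟩
    convert toLp_intCast_mem_periodVectors j (Pi.single c 1) (fun i hi =>
      Pi.single_eq_of_ne (by rintro rfl; exact hc hi) _) using 1
    ext c'
    simp [Pi.single_apply]

theorem finrank_span_periodVectors (hj : 2 * j ≤ d) :
    Module.finrank ℝ (Submodule.span ℝ (periodVectors d (tiling j))) = d - j := by
  rw [span_periodVectors j hj, finrank_span_eq_card
    ((EuclideanSpace.basisFun (Fin d) ℝ).orthonormal.linearIndependent.comp _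
      Subtype.val_injective), Fintype.card_subtype_compl, Fintype.card_fin, Fintype.card_subtype,
    Fin.card_filter_val_lt]
  omega

end ShearedCubes

/-- For every `d ≥ 2` there is a face-to-face monocoronal (up to rigid motions)
tiling of `ℝ^d` that is exactly `⌈(d+1)/2⌉`-periodic. -/
theorem exists_faceToFace_monocoronalRM_ceil_half_succ_periodic (hd : 2 ≤ d) :
    ∃ T : Set (Set (Ed d)), IsTiling d T ∧ FaceToFace d T ∧ MonocoronalRM d T ∧
      Module.finrank ℝ (Submodule.span ℝ (periodVectors d T)) = (d + 2) / 2 := by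
  have hj : 2 * (d - (d + 2) / 2) < d := by omega
  refine ⟨ShearedCubes.tiling (d - (d + 2) / 2), ShearedCubes.isTiling_tiling _,
    ShearedCubes.faceToFace_tiling _, ShearedCubes.monocoronalRM_tiling _ hj, ?_⟩
  rw [ShearedCubes.finrank_span_periodVectors _ hj.le]
  omega
end
end
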